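/- Let q be a prime power and let m, s, t, w′ be positive integers with t < m. Suppose q ≤ ∑_{i=0}^{w′} C(s, i) and m ≤ q + 1. Then there exists an (ms, t, mw′)-low-power cooling (LPC) code of size q^{m−t}. -/

import Mathlib

/-!
Let `C ⊆ F_q^m` be the doubly extended Reed–Solomon code of dimension `t`: the values of the
polynomials of degree `< t` at `m` points of the projective line over `F_q`, which exist since
`m ≤ q + 1`. It is MDS, so a codeword may be prescribed arbitrarily on any `t` coordinates;
hence each of the `q ^ (m - t)` cosets of `C` contains a vector vanishing on any `t` given
coordinates. Writing every symbol of `F_q` as a distinct binary word of length `s` and weight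
at most `w'`, with `0` written as the zero word (possible as `q` is at most the size of the
Hamming ball), turns the cosets into the codesets: `t` binary positions meet at most `t` blocks.
-/

/-- An `(n,t,w)`-low-power cooling code of size `M`: `M` pairwise disjoint subsets of
`F_2^n`, every vector in every codeset has Hamming weight at most `w`, and for every
`t`-subset `S` of coordinates and every codeset, some vector in the codeset has
support disjoint from `S`. -/
def IsLPCCode (n t w M : ℕ) (C : Fin M → Set (Fin n → ZMod 2)) : Prop :=
  (∀ i j : Fin M, i ≠ j → Disjoint (C i) (C j)) ∧
  (∀ i : Fin M, ∀ x ∈ C i, hammingNorm x ≤ w) ∧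
  ∀ S : Finset (Fin n), S.card = t → ∀ i : Fin M,
    ∃ x ∈ C i, ∀ j ∈ S, x j = 0

open Finset Function Polynomial

def IsCoolingFamily {α ι A : Type*} [Zero A] (t : ℕ) (E : α → Set (ι → A)) : Prop :=
  Pairwise (Disjoint on E) ∧ ∀ S : Finset ι, #S ≤ t → ∀ i, ∃ x ∈ E i, ∀ j ∈ S, x j = 0

namespace IsCoolingFamily

variable {α β ι ι' κ A B : Type*} [Zero A] [Zero B] {t : ℕ} {E : α → Set (ι → A)}

theorem comp (hE : IsCoolingFamily t E) {f : β → α} (hf : Injective f) :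
    IsCoolingFamily t (E ∘ f) :=
  ⟨hE.1.comp_of_injective hf, fun S hS i => hE.2 S hS (f i)⟩

theorem image [DecidableEq ι] (hE : IsCoolingFamily t E) {Ψ : (ι → A) → ι' → B}
    (hΨ : Injective Ψ) (π : ι' → ι) (hπ : ∀ v j, v (π j) = 0 → Ψ v j = 0) :
    IsCoolingFamily t fun i => Ψ '' E i := by
  refine ⟨fun i j hij => (Set.disjoint_image_iff hΨ).2 (hE.1 hij), fun S hS i => ?_⟩
  obtain ⟨x, hx, hx0⟩ := hE.2 (S.image π) (card_image_le.trans hS) i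
  exact ⟨Ψ x, Set.mem_image_of_mem Ψ hx, fun j hj => hπ x j (hx0 _ (mem_image_of_mem π hj))⟩

theorem concat [DecidableEq ι] (hE : IsCoolingFamily t E) {φ : A → κ → B} (hφ : Injective φ)
    (hφ0 : φ 0 = 0) (e : ι × κ ≃ ι') :
    IsCoolingFamily t fun i => (fun v => uncurry (φ ∘ v) ∘ e.symm) '' E i := by
  refine hE.image (fun v w h => hφ.comp_left (uncurry_injective
    (e.symm.surjective.injective_comp_right h))) (Prod.fst ∘ e.symm) fun v j hv => ?_
  simp only [comp_apply] at hv
  simp [uncurry, hv, hφ0]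

end IsCoolingFamily

theorem isLPCCode_of_isCoolingFamily {n t w M : ℕ} {C : Fin M → Set (Fin n → ZMod 2)}
    (hC : IsCoolingFamily t C) (hw : ∀ i, ∀ x ∈ C i, hammingNorm x ≤ w) :
    IsLPCCode n t w M C :=
  ⟨hC.1, hw, fun S hS => hC.2 S hS.le⟩

section Hamming

variable {ι ι' κ A : Type*} [Fintype ι] [Fintype κ] [Zero A] [DecidableEq A]

theorem hammingNorm_eq_sum (x : ι → A) : hammingNorm x = ∑ i, if x i = 0 then 0 else 1 := by
  simp [hammingNorm, card_filter]

theorem hammingNorm_comp_equiv [Fintype ι'] (x : ι → A) (e : ι' ≃ ι) :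
    hammingNorm (x ∘ e) = hammingNorm x := by
  simp only [hammingNorm_eq_sum, comp_apply, e.sum_comp (fun i => if x i = 0 then 0 else 1)]

theorem hammingNorm_uncurry (x : ι → κ → A) : hammingNorm (uncurry x) = ∑ i, hammingNorm (x i) := by
  simp only [hammingNorm_eq_sum, Fintype.sum_prod_type, uncurry_apply_pair]
  rfl

end Hamming

section HammingBall

variable {κ : Type*} [Fintype κ] [DecidableEq κ]

theorem card_filter_card_le (w : ℕ) :
    #{A : Finset κ | #A ≤ w} = ∑ i ∈ range (w + 1), (Fintype.card κ).choose i := by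
  have hdisj : Set.PairwiseDisjoint (range (w + 1) : Set ℕ)
      fun i => powersetCard i (univ : Finset κ) :=
    (univ : Finset κ).pairwise_disjoint_powersetCard.set_pairwise _
  calc #{A : Finset κ | #A ≤ w}
      = #((range (w + 1)).disjiUnion (fun i => powersetCard i univ) hdisj) := by
        congr 1; ext A; simp
    _ = _ := by rw [card_disjiUnion]; simp

theorem hammingNorm_indicator (A : Finset κ) :
    hammingNorm (fun j => if j ∈ A then (1 : ZMod 2) else 0) = #A := by
  simp [hammingNorm]

theorem exists_injective_hammingNorm_le {α : Type*} [Fintype α] [DecidableEq α] (a₀ : α)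
    {w : ℕ} (h : Fintype.card α ≤ ∑ i ∈ range (w + 1), (Fintype.card κ).choose i) :
    ∃ φ : α → κ → ZMod 2, Injective φ ∧ φ a₀ = 0 ∧ ∀ a, hammingNorm (φ a) ≤ w := by
  obtain ⟨f⟩ : Nonempty (α ↪ {A : Finset κ // #A ≤ w}) :=
    Function.Embedding.nonempty_of_card_le (by rwa [Fintype.card_subtype, card_filter_card_le])
  let g := f.setValue a₀ ⟨∅, by simp⟩
  refine ⟨fun a j => if j ∈ (g a).1 then 1 else 0, fun a b hab => g.injective ?_, ?_,
    fun a => (hammingNorm_indicator _).trans_le (g a).2⟩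
  · ext j
    have hj := congrFun hab j
    simp only at hj
    split_ifs at hj <;> simp_all
  · ext j
    simp [g]

end HammingBall

section MDS

variable {K ι : Type*} [Field K] {t : ℕ}

/-- `f` generates an MDS code of length `|ι|` and dimension `t`. -/
def IsMDS (f : (Fin t → K) →ₗ[K] ι → K) : Prop :=
  ∀ B : Finset ι, #B = t → ∀ c, (∀ j ∈ B, f c j = 0) → c = 0

variable [Fintype ι] {f : (Fin t → K) →ₗ[K] ι → K}

theorem IsMDS.injective (hf : IsMDS f) (ht : t ≤ Fintype.card ι) : Injective f := by
  obtain ⟨B, -, hB⟩ := exists_superset_card_eq (s := (∅ : Finset ι)) (by simp) ht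
  exact injective_iff_map_eq_zero f |>.2 fun c hc => hf B hB c fun j _ => by simp [hc]

theorem IsMDS.exists_eqOn (hf : IsMDS f) (ht : t ≤ Fintype.card ι) {B : Finset ι}
    (hB : #B ≤ t) (y : ι → K) : ∃ c, ∀ j ∈ B, f c j = y j := by
  obtain ⟨B', hBB', hB'⟩ := exists_superset_card_eq hB ht
  let r : (Fin t → K) →ₗ[K] B' → K := LinearMap.pi fun j => LinearMap.proj (j : ι) ∘ₗ f
  have hr : Injective r := injective_iff_map_eq_zero r |>.2 fun c hc =>
    hf B' hB' c fun j hj => congrFun hc ⟨j, hj⟩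
  obtain ⟨c, hc⟩ := (LinearMap.injective_iff_surjective_of_finrank_eq_finrank
    (by simp [hB'])).1 hr fun j => y j
  exact ⟨c, fun j hj => congrFun hc ⟨j, hBB' hj⟩⟩

theorem IsMDS.isCoolingFamily_cosets (hf : IsMDS f) (ht : t ≤ Fintype.card ι) :
    IsCoolingFamily t fun Q : (ι → K) ⧸ LinearMap.range f => {v | Submodule.Quotient.mk v = Q} := by
  refine ⟨fun Q Q' hQ => Set.disjoint_left.2 fun v hv hv' => hQ (hv.symm.trans hv'),
    fun S hS Q => ?_⟩
  obtain ⟨v, rfl⟩ := Submodule.Quotient.mk_surjective _ Q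
  obtain ⟨c, hc⟩ := hf.exists_eqOn ht hS (-v)
  refine ⟨v + f c, (Submodule.Quotient.eq _).2 ?_, fun j hj => by simp [hc j hj]⟩
  simp

theorem IsMDS.natCard_quotient [Finite K] (hf : IsMDS f) (ht : t ≤ Fintype.card ι) :
    Nat.card ((ι → K) ⧸ LinearMap.range f) = Nat.card K ^ (Fintype.card ι - t) := by
  rw [Module.natCard_eq_pow_finrank (K := K)]
  have h := (LinearMap.range f).finrank_quotient_add_finrank
  rw [LinearMap.finrank_range_of_inj (hf.injective ht), Module.finrank_fin_fun,
    Module.finrank_fintype_fun_eq_card] at h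
  rw [← h, Nat.add_sub_cancel]

end MDS

section ReedSolomon

variable {K ι : Type*} [Field K] {t : ℕ}

/-- Evaluation of polynomials of degree `< t` at a point of the projective line, `none` being
the point at infinity, where the value is the coefficient of `X ^ (t - 1)`. -/
def projEval (t : ℕ) : Option K → K[X] →ₗ[K] K
  | none => lcoeff K (t - 1)
  | some a => leval a

theorem eq_zero_of_projEval_eq_zero {p : K[X]} (hp : p.degree < t) {S : Finset (Option K)}
    (hS : #S = t) (h : ∀ x ∈ S, projEval t x p = 0) : p = 0 := by
  refine eq_zero_of_degree_lt_of_eval_finset_eq_zero S.eraseNone ?_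
    fun a ha => h _ (mem_eraseNone.1 ha)
  by_cases hnone : none ∈ S
  · -- a zero at infinity lowers the degree by one, matching the one finite point fewer
    rw [card_eraseNone_of_mem hnone, hS, degree_lt_iff_coeff_zero]
    intro n hn
    rcases hn.eq_or_lt with rfl | hn
    · exact h none hnone
    · exact coeff_eq_zero_of_degree_lt (hp.trans_le (by exact_mod_cast (by omega : t ≤ n)))
  · rwa [card_eraseNone_of_not_mem hnone, hS]

noncomputable def projReedSolomon (t : ℕ) (e : ι ↪ Option K) : (Fin t → K) →ₗ[K] ι → K :=
  LinearMap.pi fun j =>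
    projEval t (e j) ∘ₗ (degreeLT K t).subtype ∘ₗ (degreeLTEquiv K t).symm.toLinearMap

theorem isMDS_projReedSolomon (e : ι ↪ Option K) : IsMDS (projReedSolomon t e) := by
  intro B hB c hc
  have hp := eq_zero_of_projEval_eq_zero (mem_degreeLT.1 ((degreeLTEquiv K t).symm c).2)
    (S := B.map e) (by simp [hB]) (by simpa [projReedSolomon] using hc)
  simpa using hp

end ReedSolomon

theorem exists_field_card_eq {q : ℕ} (hq : IsPrimePow q) :
    ∃ (K : Type) (_ : Field K) (_ : Fintype K), Fintype.card K = q :=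
  ⟨Fin q, (Fintype.nonempty_field_iff.2 (by simpa using hq)).some, inferInstance,
    Fintype.card_fin q⟩

theorem stmt_18_general (q m s t w' : ℕ) (hq : IsPrimePow q)
    (htm : t < m)
    (hqs : q ≤ ∑ i ∈ Finset.range (w' + 1), s.choose i) (hm : m ≤ q + 1) :
    ∃ D : Fin (q ^ (m - t)) → Set (Fin (m * s) → ZMod 2),
      IsLPCCode (m * s) t (m * w') (q ^ (m - t)) D := by
  classical
  obtain ⟨K, _, _, hK⟩ := exists_field_card_eq hq
  obtain ⟨φ, hφ, hφ0, hφw⟩ :=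
    exists_injective_hammingNorm_le (κ := Fin s) (0 : K) (w := w') (by simpa [hK] using hqs)
  obtain ⟨e⟩ : Nonempty (Fin m ↪ Option K) :=
    Function.Embedding.nonempty_of_card_le (by simp [hK]; omega)
  have hf := isMDS_projReedSolomon (t := t) e
  have ht : t ≤ Fintype.card (Fin m) := by simp; omega
  let σ := Finite.equivFinOfCardEq <| by
    rw [hf.natCard_quotient ht, Nat.card_eq_fintype_card, hK, Fintype.card_fin]
  refine ⟨_, isLPCCode_of_isCoolingFamily
    (((hf.isCoolingFamily_cosets ht).comp σ.symm.injective).concat hφ hφ0 finProdFinEquiv) ?_⟩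
  rintro i _ ⟨v, -, rfl⟩
  calc hammingNorm (uncurry (φ ∘ v) ∘ finProdFinEquiv.symm)
      = ∑ j, hammingNorm (φ (v j)) := by rw [hammingNorm_comp_equiv, hammingNorm_uncurry]; rfl
    _ ≤ ∑ _j : Fin m, w' := sum_le_sum fun j _ => hφw (v j)
    _ = m * w' := by simp

theorem stmt_18 (q m s t w' : ℕ) (hq : IsPrimePow q)
    (ht : 0 < t) (htm : t < m) (hs : 0 < s) (hw : 0 < w')
    (hqs : q ≤ ∑ i ∈ Finset.range (w' + 1), s.choose i) (hm : m ≤ q + 1) :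
    ∃ D : Fin (q ^ (m - t)) → Set (Fin (m * s) → ZMod 2),
      IsLPCCode (m * s) t (m * w') (q ^ (m - t)) D :=
  stmt_18_general q m s t w' hq htm hqs hm
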